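/- Suppose (𝒳, S, γ, (Λ_a)_{a∈A}) is a spectral decomposition system for a Euclidean space 𝔥 with {Λ_a : a ∈ A} closed in L(𝒳,𝔥). Let φ : 𝒳 → [−∞,+∞] be S-invariant, let x, y ∈ 𝒳, and let a ∈ A. If y ∈ ∂_L φ(x), then Λ_a y ∈ ∂_L(φ∘γ)(Λ_a x). -/

import Mathlib

/-!
The spectral map `γ` preserves norms and, by [C], is `1`-Lipschitz. Given `Z ∈ 𝔥` and `w ∈ 𝒳`,
pick `s` with `τ w = s • w`; then `z = s⁻¹ • γ Z` satisfies `φ z = φ (γ Z)` and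
`‖z - w‖ = ‖γ Z - γ (Λ_a w)‖ ≤ ‖Z - Λ_a w‖`. Testing the Fréchet inequality of `φ` at `x`
against such a `z`, built from `w = x + (‖Z - Λ_a x‖ / ε) • y`, gives the Fréchet inequality of
`φ ∘ γ` at `Λ_a x` with subgradient `Λ_a y` and the same `ε`. Limiting subgradients are then
transported along approximating sequences by the continuity of `Λ_a`.
-/

open Filter Topology Set Metric
open scoped RealInnerProductSpace

noncomputable section

/-- A spectral decomposition system `(𝒳, S, γ, (Λ_a)_{a ∈ A})` for the space `H`:
`S` acts on `𝒳` by linear isometries (via `act`), `γ : H → 𝒳` is the spectral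
mapping, each `Λ a : 𝒳 → H` is a linear isometry, and the axioms [A], [B], [C] hold,
with `τ` the `S`-invariant ordering mapping of axiom [A]. -/
structure SDS (𝒳 H : Type*) [NormedAddCommGroup 𝒳] [InnerProductSpace ℝ 𝒳]
    [NormedAddCommGroup H] [InnerProductSpace ℝ H]
    (S : Type*) [Group S] (A : Type*) where
  act : S →* (𝒳 ≃ₗᵢ[ℝ] 𝒳)
  γ : H → 𝒳
  Λ : A → 𝒳 →ₗᵢ[ℝ] H
  τ : 𝒳 → 𝒳
  τ_inv : ∀ (s : S) (x : 𝒳), τ (act s x) = τ x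
  τ_orbit : ∀ x : 𝒳, ∃ s : S, τ x = act s x
  γΛ : ∀ (a : A) (x : 𝒳), γ (Λ a x) = τ x
  decomp : ∀ X : H, ∃ a : A, X = Λ a (γ X)
  inner_le : ∀ X Y : H, ⟪X, Y⟫ ≤ ⟪γ X, γ Y⟫

variable {𝒳 H S A : Type*} [NormedAddCommGroup 𝒳] [InnerProductSpace ℝ 𝒳]
    [NormedAddCommGroup H] [InnerProductSpace ℝ H] [Group S]

/-- The set `{Λ_a : a ∈ A}`, regarded as a subset of the space `L(𝒳, H)` of
continuous linear maps with the operator norm. -/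
def SDS.LambdaSet (𝔖 : SDS 𝒳 H S A) : Set (𝒳 →L[ℝ] H) :=
  {L | ∃ a : A, L = (𝔖.Λ a).toContinuousLinearMap}

/-- `A_X = {a ∈ A : X = Λ_a (γ X)}`. -/
def SDS.AX (𝔖 : SDS 𝒳 H S A) (X : H) : Set A := {a | X = 𝔖.Λ a (𝔖.γ X)}

/-- The Fréchet subdifferential of an extended-real-valued `f` at `x`: empty unless
`f x` is finite, in which case it is the set of `y` with
`liminf_{z → x, z ≠ x} (f(z) - f(x) - ⟨z - x, y⟩)/‖z - x‖ ≥ 0`, in ε-δ form. -/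
def fSubdiff {E : Type*} [NormedAddCommGroup E] [InnerProductSpace ℝ E]
    (f : E → EReal) (x : E) : Set E :=
  {y | (∃ r : ℝ, f x = (r : EReal)) ∧ ∀ ε : ℝ, 0 < ε → ∃ δ : ℝ, 0 < δ ∧
    ∀ z : E, ‖z - x‖ < δ → f x + ((⟪z - x, y⟫ - ε * ‖z - x‖ : ℝ) : EReal) ≤ f z}

/-- The limiting subdifferential of `f` at `x`: empty unless `f x` is finite, in which
case it is the set of limits `y` of sequences `y_n ∈ ∂_F f(x_n)` with `x_n → x` and
`f(x_n) → f(x)`. -/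
def lSubdiff {E : Type*} [NormedAddCommGroup E] [InnerProductSpace ℝ E]
    (f : E → EReal) (x : E) : Set E :=
  {y | (∃ r : ℝ, f x = (r : EReal)) ∧ ∃ xn yn : ℕ → E,
    (∀ n, yn n ∈ fSubdiff f (xn n)) ∧ Tendsto xn atTop (𝓝 x) ∧
    Tendsto (fun n => f (xn n)) atTop (𝓝 (f x)) ∧ Tendsto yn atTop (𝓝 y)}

section Transfer

variable {E F : Type*} [NormedAddCommGroup E] [InnerProductSpace ℝ E]
    [NormedAddCommGroup F] [InnerProductSpace ℝ F]

theorem norm_sub_sq_sub_two_mul_inner_le (L : E →ₗᵢ[ℝ] F) {x y z : E} {Z : F} {t : ℝ}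
    (h : ‖z - (x + t • y)‖ ≤ ‖Z - L (x + t • y)‖) :
    ‖z - x‖ ^ 2 - 2 * t * ⟪z - x, y⟫ ≤ ‖Z - L x‖ ^ 2 - 2 * t * ⟪Z - L x, L y⟫ := by
  have hsq := pow_le_pow_left₀ (norm_nonneg _) h 2
  rw [show z - (x + t • y) = (z - x) - t • y by abel, map_add, map_smul,
    show Z - (L x + t • L y) = (Z - L x) - t • L y by abel, norm_sub_sq_real (z - x),
    norm_sub_sq_real (Z - L x), real_inner_smul_right, real_inner_smul_right, norm_smul,
    norm_smul, L.norm_map] at hsq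
  linarith

variable {f : E → EReal} {g : F → EReal} {L : E →ₗᵢ[ℝ] F}

theorem map_mem_fSubdiff_of_transfer (hfg : ∀ w, g (L w) = f w)
    (htr : ∀ Z w, ∃ z, f z ≤ g Z ∧ ‖z - w‖ ≤ ‖Z - L w‖) {x y : E}
    (hy : y ∈ fSubdiff f x) : L y ∈ fSubdiff g (L x) := by
  obtain ⟨hfin, hF⟩ := hy
  refine ⟨hfg x ▸ hfin, fun ε hε => ?_⟩
  obtain ⟨δ, hδ, hδF⟩ := hF ε hε
  refine ⟨δ * ε / (ε + 2 * ‖y‖), by positivity, fun Z hZ => ?_⟩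
  rcases (norm_nonneg (Z - L x)).eq_or_lt with hD | hD
  · obtain rfl : Z = L x := sub_eq_zero.mp (norm_eq_zero.mp hD.symm)
    simp
  set D := ‖Z - L x‖
  set t := D / ε
  have htε : t * ε = D := div_mul_cancel₀ D hε.ne'
  obtain ⟨z, hfz, hzu⟩ := htr Z (x + t • y)
  set d := ‖z - x‖
  set p := ⟪z - x, y⟫
  set q := ⟪Z - L x, L y⟫
  have hkey : d ^ 2 - 2 * t * p ≤ D ^ 2 - 2 * t * q := norm_sub_sq_sub_two_mul_inner_le L hzu
  have hp : p ≤ d * ‖y‖ := real_inner_le_norm _ _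
  have hq : -(D * ‖y‖) ≤ q := by
    simpa [q, L.norm_map] using neg_le_of_abs_le (abs_real_inner_le_norm (Z - L x) (L y))
  have ht : 0 < t := div_pos hD hε
  have hdD : d - D ≤ 2 * t * ‖y‖ := by
    have hsq : (d - D) * (d + D) ≤ 2 * t * ‖y‖ * (d + D) := by
      have h1 := mul_le_mul_of_nonneg_left hp ht.le
      have h2 := mul_le_mul_of_nonneg_left hq ht.le
      linarith
    exact le_of_mul_le_mul_right hsq (by positivity)
  have hdδ : d < δ := by
    have hDδ : D * (ε + 2 * ‖y‖) < δ * ε := (lt_div_iff₀ (by positivity)).mp hZ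
    nlinarith
  -- `2 t (p - q) ≥ d² - D² ≥ 2 D (d - D) = 2 t ε (d - D)`
  have hreal : q - ε * D ≤ p - ε * d := by
    nlinarith [sq_nonneg (d - D)]
  calc g (L x) + ((q - ε * D : ℝ) : EReal)
      ≤ f x + ((p - ε * d : ℝ) : EReal) := by
        rw [hfg]
        exact add_le_add_right (EReal.coe_le_coe_iff.mpr hreal) _
    _ ≤ f z := hδF z hdδ
    _ ≤ g Z := hfz

theorem map_mem_lSubdiff_of_transfer (hfg : ∀ w, g (L w) = f w)
    (htr : ∀ Z w, ∃ z, f z ≤ g Z ∧ ‖z - w‖ ≤ ‖Z - L w‖) {x y : E}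
    (hy : y ∈ lSubdiff f x) : L y ∈ lSubdiff g (L x) := by
  obtain ⟨hfin, xn, yn, hF, hx, hfx, hyn⟩ := hy
  refine ⟨hfg x ▸ hfin, fun n => L (xn n), fun n => L (yn n),
    fun n => map_mem_fSubdiff_of_transfer hfg htr (hF n),
    (L.continuous.tendsto x).comp hx, ?_, (L.continuous.tendsto y).comp hyn⟩
  simpa only [hfg] using hfx

end Transfer

namespace SDS

variable (𝔖 : SDS 𝒳 H S A)

theorem norm_γ (Z : H) : ‖𝔖.γ Z‖ = ‖Z‖ := by
  obtain ⟨b, hb⟩ := 𝔖.decomp Z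
  conv_rhs => rw [hb, (𝔖.Λ b).norm_map]

theorem norm_γ_sub_γ_le (X Y : H) : ‖𝔖.γ X - 𝔖.γ Y‖ ≤ ‖X - Y‖ := by
  have h := 𝔖.inner_le X Y
  refine pow_le_pow_iff_left₀ (norm_nonneg _) (norm_nonneg _) two_ne_zero |>.mp ?_
  rw [norm_sub_sq_real, norm_sub_sq_real, norm_γ, norm_γ]
  linarith

variable {𝔖} {φ : 𝒳 → EReal}

theorem comp_γ_Λ (hφ : ∀ (s : S) (x : 𝒳), φ (𝔖.act s x) = φ x) (a : A) (w : 𝒳) :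
    φ (𝔖.γ (𝔖.Λ a w)) = φ w := by
  obtain ⟨s, hs⟩ := 𝔖.τ_orbit w
  rw [𝔖.γΛ, hs, hφ]

theorem exists_eq_comp_γ_and_norm_sub_le (hφ : ∀ (s : S) (x : 𝒳), φ (𝔖.act s x) = φ x)
    (a : A) (Z : H) (w : 𝒳) : ∃ z, φ z = φ (𝔖.γ Z) ∧ ‖z - w‖ ≤ ‖Z - 𝔖.Λ a w‖ := by
  obtain ⟨s, hs⟩ := 𝔖.τ_orbit w
  refine ⟨𝔖.act s⁻¹ (𝔖.γ Z), hφ _ _, ?_⟩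
  calc ‖𝔖.act s⁻¹ (𝔖.γ Z) - w‖ = ‖𝔖.γ Z - 𝔖.act s w‖ := by
        rw [← (𝔖.act s).norm_map, map_sub, ← Function.comp_apply (f := 𝔖.act s),
          ← LinearIsometryEquiv.coe_mul, ← map_mul,
          mul_inv_cancel, map_one, LinearIsometryEquiv.coe_one, id]
    _ = ‖𝔖.γ Z - 𝔖.γ (𝔖.Λ a w)‖ := by rw [𝔖.γΛ, hs]
    _ ≤ ‖Z - 𝔖.Λ a w‖ := 𝔖.norm_γ_sub_γ_le _ _

end SDS

theorem limiting_subdiff_lambda_general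
    (𝔖 : SDS 𝒳 H S A)
    (φ : 𝒳 → EReal) (hφ : ∀ (s : S) (x : 𝒳), φ (𝔖.act s x) = φ x)
    (x y : 𝒳) (a : A) (hy : y ∈ lSubdiff φ x) :
    𝔖.Λ a y ∈ lSubdiff (fun Z => φ (𝔖.γ Z)) (𝔖.Λ a x) :=
  map_mem_lSubdiff_of_transfer (SDS.comp_γ_Λ hφ a)
    (fun Z w => (SDS.exists_eq_comp_γ_and_norm_sub_le hφ a Z w).imp fun _ h => ⟨h.1.le, h.2⟩) hy

/-- For an `S`-invariant `φ : 𝒳 → [-∞, +∞]`, `x, y ∈ 𝒳` and `a ∈ A`: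
if `y ∈ ∂_L φ(x)` then `Λ_a y ∈ ∂_L(φ ∘ γ)(Λ_a x)`. -/
theorem limiting_subdiff_lambda
    [FiniteDimensional ℝ 𝒳] [FiniteDimensional ℝ H]
    (𝔖 : SDS 𝒳 H S A) (hcl : IsClosed 𝔖.LambdaSet)
    (φ : 𝒳 → EReal) (hφ : ∀ (s : S) (x : 𝒳), φ (𝔖.act s x) = φ x)
    (x y : 𝒳) (a : A) (hy : y ∈ lSubdiff φ x) :
    𝔖.Λ a y ∈ lSubdiff (fun Z => φ (𝔖.γ Z)) (𝔖.Λ a x) :=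
  limiting_subdiff_lambda_general 𝔖 φ hφ x y a hy
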